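/- arXiv:2508.12127 — 6 statements merged into one kernel-verified Lean document; each statement's English description precedes it below -/
import Mathlib

section
/- For every prime $p$ and every residue class $\lambda$ modulo $p$, there exist integers $m_1, n_1, m_2, n_2$ with $1 \le m_i, n_i \le p$ such that $m_1! \, n_1! + m_2! \, n_2! \equiv \lambda \pmod p$. -/
open Nat

lemma key_fact (p : ℕ) (hp : p.Prime) :
    ∀ k, 1 ≤ k → k ≤ p - 1 →
      ((k.factorial : ZMod p) * ((p - k).factorial : ZMod p) = (-1) ^ k * k) := by
  haveI : Fact p.Prime := ⟨hp⟩
  intro k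
  induction k with
  | zero => intro h; omega
  | succ k ih =>
    intro _ hk1
    rcases Nat.eq_or_lt_of_le (Nat.one_le_iff_ne_zero.mpr (Nat.succ_ne_zero k)) with h1 | h1
    · -- k + 1 = 1
      have hk0 : k = 0 := by omega
      subst hk0
      simp [Nat.factorial, ZMod.wilsons_lemma]
    · -- k ≥ 1
      have hk : 1 ≤ k := by omega
      have hkp : k ≤ p - 1 := by omega
      have IH := ih hk hkp
      have hple : k + 1 ≤ p - 1 := hk1
      have hp2 : 2 ≤ p := hp.two_le
      have hsub : p - k = (p - k - 1) + 1 := by omega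
      have hfac : (p - k).factorial = (p - k) * (p - (k + 1)).factorial := by
        rw [hsub]
        have : p - (k + 1) = p - k - 1 := by omega
        rw [this, Nat.factorial_succ]
      rw [hfac] at IH
      push_cast at IH
      have hcast : ((p - k : ℕ) : ZMod p) = -(k : ZMod p) := by
        have : ((p - k : ℕ) : ZMod p) = ((p : ℕ) : ZMod p) - (k : ZMod p) := by
          have hle : k ≤ p := by omega
          push_cast [hle]; ring
        rw [this, ZMod.natCast_self]; ring
      rw [hcast] at IH
      have hkne : (k : ZMod p) ≠ 0 := by
        have : k < p := by omega
        have hv : (k : ZMod p).val = k := ZMod.val_cast_of_lt this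
        intro h
        rw [h, ZMod.val_zero] at hv
        omega
      rw [Nat.factorial_succ]
      push_cast
      -- goal: (k+1) * k! * (p - (k+1))! = (-1)^(k+1) * (k+1)
      have hkfac : (k.factorial : ZMod p) * ((p - (k + 1)).factorial : ZMod p)
          = (-1) ^ (k + 1) := by
        have h2 : (k : ZMod p) * ((k.factorial : ZMod p) * ((p - (k + 1)).factorial : ZMod p))
            = (k : ZMod p) * (-1) ^ (k + 1) := by
          have : -((k : ZMod p) * ((k.factorial : ZMod p) * ((p - (k+1)).factorial : ZMod p)))
              = (-1) ^ k * k := by rw [← IH]; ring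
          have h3 : (k : ZMod p) * ((k.factorial : ZMod p) * ((p - (k+1)).factorial : ZMod p))
              = -((-1) ^ k * k) := by
            rw [← this]; ring
          rw [h3, pow_succ]; ring
        exact mul_left_cancel₀ hkne h2
      calc ((k : ZMod p) + 1) * (k.factorial : ZMod p) * ((p - (k + 1)).factorial : ZMod p)
          = ((k : ZMod p) + 1) * ((k.factorial : ZMod p) * ((p - (k + 1)).factorial : ZMod p)) := by ring
        _ = ((k : ZMod p) + 1) * (-1) ^ (k + 1) := by rw [hkfac]
        _ = (-1) ^ (k + 1) * ((k : ZMod p) + 1) := by ring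

theorem stmt_1 (p : ℕ) (hp : p.Prime) (lam : ZMod p) :
    ∃ m₁ n₁ m₂ n₂ : ℕ,
      1 ≤ m₁ ∧ m₁ ≤ p ∧ 1 ≤ n₁ ∧ n₁ ≤ p ∧ 1 ≤ m₂ ∧ m₂ ≤ p ∧ 1 ≤ n₂ ∧ n₂ ≤ p ∧
      (Nat.factorial m₁ : ZMod p) * (Nat.factorial n₁ : ZMod p)
        + (Nat.factorial m₂ : ZMod p) * (Nat.factorial n₂ : ZMod p) = lam := by
  haveI : Fact p.Prime := ⟨hp⟩
  have hp1 : 1 ≤ p := hp.one_lt.le.trans' (by norm_num)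
  have hpfac : ((p.factorial : ℕ) : ZMod p) = 0 := by
    rw [ZMod.natCast_eq_zero_iff]
    exact Nat.dvd_factorial hp.pos le_rfl
  set l := lam.val with hl
  have hlp : l < p := ZMod.val_lt lam
  have hlam : ((l : ℕ) : ZMod p) = lam := ZMod.natCast_rightInverse lam
  rcases Nat.lt_or_ge l 2 with hl2 | hl2
  · interval_cases l
    · exact ⟨p, p, p, p, hp1, le_rfl, hp1, le_rfl, hp1, le_rfl, hp1, le_rfl, by
        rw [hpfac]; simpa using hlam⟩
    · exact ⟨1, 1, p, p, le_rfl, hp1, le_rfl, hp1, hp1, le_rfl, hp1, le_rfl, by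
        rw [hpfac]; simp [Nat.factorial]; simpa using hlam⟩
  · rcases Nat.even_or_odd l with he | ho
    · -- l even, 2 ≤ l ≤ p-1
      have h1 : 1 ≤ l := by omega
      have h2 : l ≤ p - 1 := by omega
      have := key_fact p hp l h1 h2
      rw [he.neg_one_pow, one_mul] at this
      exact ⟨l, p - l, p, p, h1, by omega, by omega, by omega, hp1, le_rfl, hp1, le_rfl, by
        rw [hpfac, this]; simpa using hlam⟩
    · -- l odd, l ≥ 3 (since l ≥ 2 and odd)
      have h1 : 1 ≤ l - 1 := by omega
      have h2 : l - 1 ≤ p - 1 := by omega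
      have heven : Even (l - 1) := by
        rcases ho with ⟨m, hm⟩
        exact ⟨m, by omega⟩
      have := key_fact p hp (l - 1) h1 h2
      rw [heven.neg_one_pow, one_mul] at this
      refine ⟨l - 1, p - (l - 1), 1, 1, h1, by omega, by omega, by omega, le_rfl, hp1,
        le_rfl, hp1, ?_⟩
      rw [this]
      simp only [Nat.factorial_one, Nat.cast_one, one_mul]
      rw [← hlam]
      have : ((l - 1 : ℕ) : ZMod p) = (l : ZMod p) - 1 := by
        push_cast [Nat.cast_sub (by omega : 1 ≤ l)]; ring
      rw [this]; ring
end

section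
/- Let $p$ be a prime, $s_0 \in \mathbb{F}_p$, and $X, Y \ge 1$ real numbers. The number of pairs $(x, y)$ of positive integers with $x \le X$, $y \le Y$, $\gcd(x, y) = 1$, and $x \equiv s_0 y \pmod p$ is $O(1 + XY/p)$, with an absolute implied constant. -/
/-!
Let `(a, b)` be the solution of least slope `a / b`. For every other solution `(x, y)` the
difference `x b - a y` is positive (two coprime pairs of equal slope coincide), divisible by `p`
(both pairs satisfy `x ≡ s₀ y`) and at most `X b`; and since `a` is invertible modulo `b`, this
difference together with `⌊y / b⌋` determines `(x, y)`. Hence there are at most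
`1 + (X b / p) (Y / b + 1) ≤ 1 + 2 X Y / p` solutions.
-/

open Finset

theorem Nat.Coprime.eq_of_mul_eq_mul {a b x y : ℕ} (hab : a.Coprime b) (hxy : x.Coprime y)
    (h : x * b = a * y) : x = a ∧ y = b := by
  refine ⟨Nat.dvd_antisymm ?_ ?_, Nat.dvd_antisymm ?_ ?_⟩
  · exact hxy.dvd_of_dvd_mul_right ⟨b, by linarith⟩
  · exact hab.dvd_of_dvd_mul_right ⟨y, by linarith⟩
  · exact hxy.symm.dvd_of_dvd_mul_left ⟨a, by linarith⟩
  · exact hab.symm.dvd_of_dvd_mul_left ⟨x, by linarith⟩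

theorem eq_of_mul_sub_mul_eq_of_div_eq {a b x y x' y' : ℕ} (hab : a.Coprime b) (hb : 0 < b)
    (hle : a * y ≤ x * b) (hle' : a * y' ≤ x' * b)
    (hdiff : x * b - a * y = x' * b - a * y') (hdiv : y / b = y' / b) : x = x' ∧ y = y' := by
  have hsum : a * y + x' * b = a * y' + x * b := by omega
  have hmod : a * y ≡ a * y' [MOD b] := by
    simpa [Nat.ModEq, Nat.add_mul_mod_self_right] using congrArg (· % b) hsum
  have hy : y = y' := by
    rw [← Nat.div_add_mod y b, ← Nat.div_add_mod y' b, hdiv,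
      Nat.ModEq.cancel_left_of_coprime (Nat.coprime_comm.mp hab) hmod]
  subst hy
  exact ⟨Nat.eq_of_mul_eq_mul_right hb (by omega), rfl⟩

theorem Finset.exists_mem_forall_mul_le_mul (S : Finset (ℕ × ℕ)) (hS : S.Nonempty)
    (hpos : ∀ q ∈ S, 0 < q.2) : ∃ m ∈ S, ∀ q ∈ S, m.1 * q.2 ≤ q.1 * m.2 := by
  obtain ⟨m, hmS, hmin⟩ := S.exists_min_image (fun q => (q.1 : ℚ) / q.2) hS
  refine ⟨m, hmS, fun q hq => ?_⟩
  have h := hmin q hq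
  rw [div_le_div_iff₀ (by exact_mod_cast hpos m hmS) (by exact_mod_cast hpos q hq)] at h
  exact_mod_cast h

def coprimeSolutions (n : ℕ) (s₀ : ZMod n) (N K : ℕ) : Finset (ℕ × ℕ) :=
  ((Icc 1 N) ×ˢ (Icc 1 K)).filter
    (fun q : ℕ × ℕ => Nat.gcd q.1 q.2 = 1 ∧ (q.1 : ZMod n) = s₀ * (q.2 : ZMod n))

section coprimeSolutions

variable {n : ℕ} {s₀ : ZMod n} {N K : ℕ}

theorem mem_coprimeSolutions {q : ℕ × ℕ} :
    q ∈ coprimeSolutions n s₀ N K ↔ (1 ≤ q.1 ∧ q.1 ≤ N) ∧ (1 ≤ q.2 ∧ q.2 ≤ K) ∧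
      q.1.Coprime q.2 ∧ (q.1 : ZMod n) = s₀ * q.2 := by
  simp [coprimeSolutions, and_assoc, Nat.Coprime]

theorem modEq_of_mem_coprimeSolutions {q q' : ℕ × ℕ} (hq : q ∈ coprimeSolutions n s₀ N K)
    (hq' : q' ∈ coprimeSolutions n s₀ N K) : q.1 * q'.2 ≡ q'.1 * q.2 [MOD n] := by
  rw [← ZMod.natCast_eq_natCast_iff]
  push_cast
  rw [(mem_coprimeSolutions.mp hq).2.2.2, (mem_coprimeSolutions.mp hq').2.2.2]
  ring

theorem card_coprimeSolutions_le_of_forall_mul_le {a b : ℕ}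
    (hm : (a, b) ∈ coprimeSolutions n s₀ N K)
    (hmin : ∀ q ∈ coprimeSolutions n s₀ N K, a * q.2 ≤ q.1 * b) :
    #(coprimeSolutions n s₀ N K) ≤ 1 + N * b / n * (K / b + 1) := by
  set S := coprimeSolutions n s₀ N K
  obtain ⟨-, ⟨hb, -⟩, hab, -⟩ := mem_coprimeSolutions.mp hm
  have hmaps : ∀ q ∈ S.erase (a, b),
      (q.1 * b - a * q.2, q.2 / b) ∈ (Ioc 0 (N * b)).filter (n ∣ ·) ×ˢ range (K / b + 1) := by
    intro q hq
    obtain ⟨hne, hqS⟩ := mem_erase.mp hq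
    obtain ⟨⟨-, hxN⟩, ⟨-, hyK⟩, hxy, -⟩ := mem_coprimeSolutions.mp hqS
    have hlt : a * q.2 < q.1 * b := by
      refine (hmin q hqS).lt_of_ne fun h => hne ?_
      obtain ⟨hx, hy⟩ := hab.eq_of_mul_eq_mul hxy h.symm
      exact Prod.ext hx hy
    simp only [mem_product, mem_filter, mem_Ioc, mem_range]
    refine ⟨⟨⟨by omega, (Nat.sub_le _ _).trans (Nat.mul_le_mul_right b hxN)⟩, ?_⟩,
      Nat.lt_succ_of_le (Nat.div_le_div_right hyK)⟩
    exact (Nat.modEq_iff_dvd' hlt.le).mp (modEq_of_mem_coprimeSolutions hm hqS)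
  have hinj : Set.InjOn (fun q : ℕ × ℕ => (q.1 * b - a * q.2, q.2 / b)) (S.erase (a, b)) := by
    intro q hq q' hq' h
    obtain ⟨hdiff, hdiv⟩ := Prod.mk.inj h
    obtain ⟨hx, hy⟩ := eq_of_mul_sub_mul_eq_of_div_eq hab hb (hmin q (mem_of_mem_erase hq))
      (hmin q' (mem_of_mem_erase hq')) hdiff hdiv
    exact Prod.ext hx hy
  calc #S = #(S.erase (a, b)) + 1 := (card_erase_add_one hm).symm
    _ ≤ N * b / n * (K / b + 1) + 1 := by
      simpa [Nat.Ioc_filter_dvd_card_eq_div] using card_le_card_of_injOn _ hmaps hinj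
    _ = _ := add_comm _ _

end coprimeSolutions

theorem card_coprimeSolutions_floor_le (n : ℕ) (s₀ : ZMod n) {X Y : ℝ} (hX : 0 ≤ X)
    (hY : 0 ≤ Y) : (#(coprimeSolutions n s₀ ⌊X⌋₊ ⌊Y⌋₊) : ℝ) ≤ 1 + 2 * (X * Y / n) := by
  rcases (coprimeSolutions n s₀ ⌊X⌋₊ ⌊Y⌋₊).eq_empty_or_nonempty with hS | hS
  · rw [hS, card_empty, Nat.cast_zero]
    positivity
  obtain ⟨⟨a, b⟩, hm, hmin⟩ := exists_mem_forall_mul_le_mul _ hS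
    fun q hq => (mem_coprimeSolutions.mp hq).2.1.1
  obtain ⟨-, ⟨hb, hbK⟩, -⟩ := mem_coprimeSolutions.mp hm
  have hb₀ : (0 : ℝ) < b := by exact_mod_cast hb
  have hbY : (b : ℝ) ≤ Y := (Nat.cast_le.mpr hbK).trans (Nat.floor_le hY)
  have hfirst : ((⌊X⌋₊ * b / n : ℕ) : ℝ) ≤ X * b / n := by
    refine Nat.cast_div_le.trans ?_
    push_cast
    gcongr
    exact Nat.floor_le hX
  have hsecond : ((⌊Y⌋₊ / b : ℕ) : ℝ) + 1 ≤ 2 * Y / b := by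
    have h1 : (1 : ℝ) ≤ Y / b := (one_le_div hb₀).mpr hbY
    have h2 : ((⌊Y⌋₊ / b : ℕ) : ℝ) ≤ Y / b :=
      Nat.cast_div_le.trans (div_le_div_of_nonneg_right (Nat.floor_le hY) hb₀.le)
    linarith [mul_div_assoc 2 Y (b : ℝ)]
  calc (#(coprimeSolutions n s₀ ⌊X⌋₊ ⌊Y⌋₊) : ℝ)
      ≤ 1 + ((⌊X⌋₊ * b / n : ℕ) : ℝ) * (((⌊Y⌋₊ / b : ℕ) : ℝ) + 1) := by
        exact_mod_cast card_coprimeSolutions_le_of_forall_mul_le hm hmin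
    _ ≤ 1 + X * b / n * (2 * Y / b) := by gcongr
    _ = 1 + 2 * (X * Y / n) := by field_simp

theorem stmt_6 :
    ∃ C : ℝ, 0 < C ∧ ∀ (p : ℕ), p.Prime → ∀ (s₀ : ZMod p) (X Y : ℝ), 1 ≤ X → 1 ≤ Y →
      ((((Finset.Icc 1 ⌊X⌋₊) ×ˢ (Finset.Icc 1 ⌊Y⌋₊)).filter
          (fun q : ℕ × ℕ => Nat.gcd q.1 q.2 = 1 ∧ (q.1 : ZMod p) = s₀ * (q.2 : ZMod p))).card : ℝ)
        ≤ C * (1 + X * Y / p) := by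
  refine ⟨2, two_pos, fun p _ s₀ X Y hX hY => ?_⟩
  have hXY : 0 ≤ X * Y / p := by positivity
  calc _ ≤ 1 + 2 * (X * Y / p) :=
        card_coprimeSolutions_floor_le p s₀ (zero_le_one.trans hX) (zero_le_one.trans hY)
    _ ≤ 2 * (1 + X * Y / p) := by linarith
end

section
/- Let $p$ be a prime, $\mathcal{M} \subseteq \mathbb{F}_p^*$ with $|\mathcal{M}| = M$, and let $\mathcal{P}_N$ denote the set of primes $q \le N$ (viewed modulo $p$, with $N < p$). Then the number $J$ of quadruples $(q, r, m, n)$ with $q, r \in \mathcal{P}_N$, $m, n \in \mathcal{M}$, and $qm \equiv rn \pmod p$ satisfies $J \ll NM/\log N + M^2 + N^2 M^2 / p$. -/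
/-!
Split the quadruples into the diagonal `q = r`, where `m = n` is forced and at most
`π(N) |M| ≪ N |M| / log N` quadruples occur (Chebyshev), and the rest. For fixed `(m, n)` the
off-diagonal pairs `(q, r)` are coprime and satisfy `q ≡ s r (mod p)` with `s = n m⁻¹`, so
they number `O(1 + N² / p)` (Cilleruelo–Garaev). For the latter, fix one solution `(a, b)` with
`b ≤ a`; every other solution `(x, y)` has `p ∣ x b - a y` with `|x b - a y| ≤ N a`, and
`(x, y) ↦ ((x b - a y) / p, x / a)` is injective, so there are at most
`(2 N a / p + 1) (N / a + 1)` of them, while a second solution forces `p ≤ N a`.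
-/

open Finset

theorem natAbs_mul_sub_mul_le {N a b x y : ℕ} (hx : x ≤ N) (hy : y ≤ N) (hba : b ≤ a) :
    ((x * b : ℤ) - a * y).natAbs ≤ N * a := by
  have h1 : x * b ≤ N * a := Nat.mul_le_mul hx hba
  have h2 : a * y ≤ N * a := by rw [mul_comm]; exact Nat.mul_le_mul_right a hy
  omega

theorem card_le_of_forall_dvd_mul_sub_mul {N p a b : ℕ} (hp : 0 < p) (ha : 0 < a)
    (hab : a.Coprime b) (hba : b ≤ a) (S : Finset (ℕ × ℕ))
    (hS : ∀ x ∈ S, x.1 ≤ N ∧ x.2 ≤ N) (hdvd : ∀ x ∈ S, (p : ℤ) ∣ x.1 * b - a * x.2) :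
    #S ≤ (2 * (N * a / p) + 1) * (N / a + 1) := by
  set K := N * a / p
  let f : ℕ × ℕ → ℤ × ℕ := fun x => ((x.1 * b - a * x.2 : ℤ) / p, x.1 / a)
  have hf : ∀ x ∈ S, (f x).1 * p = x.1 * b - a * x.2 := fun x hx =>
    Int.ediv_mul_cancel (hdvd x hx)
  have hmaps : ∀ x ∈ S, f x ∈ Icc (-K : ℤ) K ×ˢ range (N / a + 1) := by
    intro x hx
    have hk : (f x).1.natAbs ≤ K := by
      rw [Nat.le_div_iff_mul_le hp]
      have := congrArg Int.natAbs (hf x hx)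
      rw [Int.natAbs_mul, Int.natAbs_natCast] at this
      rw [this]
      exact natAbs_mul_sub_mul_le (hS x hx).1 (hS x hx).2 hba
    simp only [mem_product, mem_Icc, mem_range]
    exact ⟨by omega, Nat.lt_succ_of_le (Nat.div_le_div_right (hS x hx).1)⟩
  have hinj : Set.InjOn f S := by
    intro x hx y hy hxy
    have hd : (x.1 * b - a * x.2 : ℤ) = y.1 * b - a * y.2 := by
      rw [← hf x hx, ← hf y hy, congrArg Prod.fst hxy]
    have hmod : x.1 ≡ y.1 [MOD a] := by
      refine (Nat.modEq_iff_dvd.mpr ?_).symm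
      refine (Nat.isCoprime_iff_coprime.mpr hab).dvd_of_dvd_mul_left ⟨x.2 - y.2, ?_⟩
      linear_combination hd
    have h1 : x.1 = y.1 := by
      have hq : x.1 / a = y.1 / a := congrArg Prod.snd hxy
      rw [← Nat.div_add_mod x.1 a, ← Nat.div_add_mod y.1 a, hq, hmod]
    have h2 : x.2 = y.2 := by
      rw [h1] at hd
      have : (a : ℤ) * x.2 = a * y.2 := by linarith
      exact_mod_cast mul_left_cancel₀ (by positivity) this
    exact Prod.ext h1 h2
  calc #S ≤ #(Icc (-K : ℤ) K ×ˢ range (N / a + 1)) := card_le_card_of_injOn f hmaps hinj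
    _ = (2 * K + 1) * (N / a + 1) := by
      rw [card_product, Int.card_Icc, card_range]
      congr 1
      omega

theorem two_mul_div_add_one_mul_div_add_one_mul_le {N p a : ℕ} (hpa : p ≤ N * a) (haN : a ≤ N) :
    (2 * (N * a / p) + 1) * (N / a + 1) * p ≤ p + 5 * N ^ 2 := by
  set K := N * a / p
  set L := N / a
  have hK : K * p ≤ N * a := Nat.div_mul_le_self _ _
  have hL : L * a ≤ N := Nat.div_mul_le_self _ _
  have e1 : K * p ≤ N * N := hK.trans (Nat.mul_le_mul_left N haN)
  have e2 : L * p ≤ N * N := calc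
    L * p ≤ L * (N * a) := Nat.mul_le_mul_left L hpa
    _ = N * (L * a) := by ring
    _ ≤ N * N := Nat.mul_le_mul_left N hL
  have e3 : K * L * p ≤ N * N := calc
    K * L * p = K * p * L := by ring
    _ ≤ N * a * L := Nat.mul_le_mul_right L hK
    _ = N * (L * a) := by ring
    _ ≤ N * N := Nat.mul_le_mul_left N hL
  nlinarith

theorem card_mul_le_of_forall_mul_modEq {N p a b : ℕ} (hp : 0 < p) (S : Finset (ℕ × ℕ))
    (hS : ∀ x ∈ S, x.1 ≤ N ∧ x.2 ≤ N ∧ x.1.Coprime x.2)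
    (hcross : ∀ x ∈ S, ∀ y ∈ S, x.1 * y.2 ≡ y.1 * x.2 [MOD p])
    (hab : (a, b) ∈ S) (hba : b ≤ a) (hS1 : 1 < #S) :
    #S * p ≤ p + 5 * N ^ 2 := by
  obtain ⟨haN, -, hcop⟩ := hS _ hab
  have ha : 0 < a := Nat.pos_of_ne_zero fun h => by simp_all
  have hdvd : ∀ x ∈ S, (p : ℤ) ∣ x.1 * b - a * x.2 := fun x hx =>
    Nat.modEq_iff_dvd.mp (hcross _ hab x hx)
  have hpa : p ≤ N * a := by
    obtain ⟨x, hx, hne⟩ := exists_mem_ne hS1 (a, b)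
    have hne' : (x.1 * b - a * x.2 : ℤ) ≠ 0 := fun h => hne <| Prod.ext_iff.mpr <|
      hcop.eq_of_mul_eq_mul (hS x hx).2.2 (by exact_mod_cast sub_eq_zero.mp h)
    calc p ≤ (x.1 * b - a * x.2 : ℤ).natAbs :=
          Nat.le_of_dvd (Int.natAbs_pos.mpr hne') (Int.natAbs_dvd_natAbs.mpr (hdvd x hx))
      _ ≤ N * a := natAbs_mul_sub_mul_le (hS x hx).1 (hS x hx).2.1 hba
  have hcard := card_le_of_forall_dvd_mul_sub_mul hp ha hcop hba S
    (fun x hx => ⟨(hS x hx).1, (hS x hx).2.1⟩) hdvd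
  exact (Nat.mul_le_mul_right p hcard).trans (two_mul_div_add_one_mul_div_add_one_mul_le hpa haN)

theorem card_le_of_forall_mul_modEq {N p : ℕ} (hp : 0 < p) (S : Finset (ℕ × ℕ))
    (hS : ∀ x ∈ S, x.1 ≤ N ∧ x.2 ≤ N ∧ x.1.Coprime x.2)
    (hcross : ∀ x ∈ S, ∀ y ∈ S, x.1 * y.2 ≡ y.1 * x.2 [MOD p]) :
    (#S : ℝ) ≤ 1 + 5 * N ^ 2 / p := by
  have hp' : (0 : ℝ) < p := by exact_mod_cast hp
  rcases le_or_gt #S 1 with hS1 | hS1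
  · have : (0 : ℝ) ≤ 5 * N ^ 2 / p := by positivity
    have : (#S : ℝ) ≤ 1 := by exact_mod_cast hS1
    linarith
  obtain ⟨⟨a, b⟩, hab⟩ := card_pos.mp (by omega : 0 < #S)
  wlog hba : b ≤ a generalizing S a b
  · have hcard : #(S.image Prod.swap) = #S := card_image_of_injective _ Prod.swap_injective
    have hS' : ∀ x ∈ S.image Prod.swap, x.1 ≤ N ∧ x.2 ≤ N ∧ x.1.Coprime x.2 := by
      simp only [forall_mem_image]
      exact fun x hx => ⟨(hS x hx).2.1, (hS x hx).1, (hS x hx).2.2.symm⟩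
    have hcross' : ∀ x ∈ S.image Prod.swap, ∀ y ∈ S.image Prod.swap,
        x.1 * y.2 ≡ y.1 * x.2 [MOD p] := by
      simp only [forall_mem_image]
      intro x hx y hy
      simpa only [Prod.fst_swap, Prod.snd_swap, mul_comm] using (hcross x hx y hy).symm
    have := this (S.image Prod.swap) hS' hcross' (hcard ▸ hS1) b a
      (mem_image_of_mem _ hab) (by omega)
    rwa [hcard] at this
  have hmul : (#S * p : ℝ) ≤ p + 5 * N ^ 2 := by
    exact_mod_cast card_mul_le_of_forall_mul_modEq hp S hS hcross hab hba hS1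
  rw [← sub_le_iff_le_add', le_div_iff₀ hp']
  linarith

theorem card_coprime_pairs_eq_mul_le {p : ℕ} (hp : 0 < p) (N : ℕ) (s : ZMod p) :
    (#{x ∈ range (N + 1) ×ˢ range (N + 1) | x.1.Coprime x.2 ∧ (x.1 : ZMod p) = s * x.2} : ℝ)
      ≤ 1 + 5 * N ^ 2 / p := by
  refine card_le_of_forall_mul_modEq hp _ (fun x hx => ?_) (fun x hx y hy => ?_)
  · simp only [mem_filter, mem_product, mem_range] at hx
    exact ⟨by omega, by omega, hx.2.1⟩
  · simp only [mem_filter] at hx hy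
    rw [← ZMod.natCast_eq_natCast_iff]
    push_cast
    rw [hx.2.2, hy.2.2]
    ring

open scoped Nat.Prime in
theorem exists_primeCounting_le_mul_div_log :
    ∃ C : ℝ, ∀ N : ℕ, 2 ≤ N → (π N : ℝ) ≤ C * N / Real.log N := by
  obtain ⟨X, hX⟩ := Filter.eventually_atTop.mp (Chebyshev.eventually_primeCounting_le one_pos)
  refine ⟨max (Real.log 4 + 1) (Real.log X), fun N hN => ?_⟩
  have hlog : 0 < Real.log N := Real.log_pos (by exact_mod_cast hN)
  rcases le_or_gt X N with hXN | hNX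
  · calc (π N : ℝ) ≤ (Real.log 4 + 1) * N / Real.log N := by simpa using hX N hXN
      _ ≤ _ := by gcongr; exact le_max_left _ _
  · have hπ : π N ≤ N := by
      rw [← Nat.primesLE_card_eq_primeCounting, Nat.primesLE_eq_filter_Icc_one]
      exact (card_filter_le _ _).trans (by simp)
    have hXN : 1 ≤ Real.log X / Real.log N :=
      (one_le_div hlog).mpr (Real.log_le_log (by positivity) hNX.le)
    calc (π N : ℝ) ≤ N := by exact_mod_cast hπ
      _ ≤ Real.log X / Real.log N * N := le_mul_of_one_le_left (by positivity) hXN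
      _ ≤ max (Real.log 4 + 1) (Real.log X) / Real.log N * N := by gcongr; exact le_max_right _ _
      _ = _ := div_mul_eq_mul_div _ _ _

def mulEqQuadruples {p : ℕ} (P : Finset ℕ) (M : Finset (ZMod p)) :
    Finset (ℕ × ℕ × (ZMod p × ZMod p)) :=
  {t ∈ P ×ˢ P ×ˢ (M ×ˢ M) | (t.1 : ZMod p) * t.2.2.1 = t.2.1 * t.2.2.2}

theorem mem_mulEqQuadruples {p : ℕ} {P : Finset ℕ} {M : Finset (ZMod p)}
    {t : ℕ × ℕ × (ZMod p × ZMod p)} :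
    t ∈ mulEqQuadruples P M ↔ (t.1 ∈ P ∧ t.2.1 ∈ P ∧ t.2.2.1 ∈ M ∧ t.2.2.2 ∈ M) ∧
      (t.1 : ZMod p) * t.2.2.1 = t.2.1 * t.2.2.2 := by
  simp only [mulEqQuadruples, mem_filter, mem_product]

theorem card_diagonal_mulEqQuadruples_le {p : ℕ} (P : Finset ℕ) (M : Finset (ZMod p))
    (hP : ∀ q ∈ P, IsUnit (q : ZMod p)) :
    #{t ∈ mulEqQuadruples P M | t.1 = t.2.1} ≤ #P * #M := by
  rw [← card_product]
  refine card_le_card_of_injOn (fun t => (t.1, t.2.2.1)) (fun t ht => ?_) fun t ht t' ht' h => ?_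
  · simp only [coe_filter, Set.mem_ofPred_eq, mem_mulEqQuadruples] at ht
    exact mem_product.mpr ⟨ht.1.1.1, ht.1.1.2.2.1⟩
  · obtain ⟨q, r, m, n⟩ := t
    obtain ⟨q', r', m', n'⟩ := t'
    simp only [coe_filter, Set.mem_ofPred_eq, mem_mulEqQuadruples] at ht ht'
    obtain ⟨⟨⟨hq, -⟩, hqmn⟩, rfl⟩ := ht
    obtain ⟨⟨-, hqmn'⟩, rfl⟩ := ht'
    obtain ⟨rfl, rfl⟩ := Prod.mk.inj h
    dsimp only at hqmn' ⊢
    rw [← (hP q hq).mul_left_cancel hqmn, ← (hP q hq).mul_left_cancel hqmn']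

theorem card_offDiagonal_mulEqQuadruples_le {p N : ℕ} [Fact p.Prime] (P : Finset ℕ)
    (M : Finset (ZMod p)) (hP : ∀ q ∈ P, q ≤ N) (hcop : ∀ q ∈ P, ∀ r ∈ P, q ≠ r → q.Coprime r)
    (hM : ∀ m ∈ M, m ≠ 0) :
    (#{t ∈ mulEqQuadruples P M | t.1 ≠ t.2.1} : ℝ) ≤ #M ^ 2 * (1 + 5 * N ^ 2 / p) := by
  set Q := {t ∈ mulEqQuadruples P M | t.1 ≠ t.2.1}
  have hfiber : ∀ y ∈ M ×ˢ M, (#{t ∈ Q | t.2.2 = y} : ℝ) ≤ 1 + 5 * N ^ 2 / p := by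
    rintro ⟨m, n⟩ hy
    have hm : m ≠ 0 := hM _ (mem_product.mp hy).1
    refine le_trans ?_ (card_coprime_pairs_eq_mul_le (Fact.out : p.Prime).pos N (n * m⁻¹))
    have hmaps : ∀ t ∈ {t ∈ Q | t.2.2 = (m, n)}, (t.1, t.2.1) ∈
        {x ∈ range (N + 1) ×ˢ range (N + 1) |
          x.1.Coprime x.2 ∧ (x.1 : ZMod p) = n * m⁻¹ * x.2} := by
      rintro ⟨q, r, m', n'⟩ ht
      simp only [Q, mem_filter, mem_mulEqQuadruples] at ht
      obtain ⟨⟨⟨⟨hq, hr, -⟩, hqr⟩, hne⟩, rfl, rfl⟩ := ht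
      simp only [mem_filter, mem_product, mem_range]
      refine ⟨⟨Nat.lt_succ_of_le (hP _ hq), Nat.lt_succ_of_le (hP _ hr)⟩, hcop _ hq _ hr hne, ?_⟩
      field_simp
      linear_combination hqr
    refine Nat.cast_le.mpr (card_le_card_of_injOn _ hmaps fun t ht t' ht' h => ?_)
    simp only [coe_filter, Set.mem_ofPred_eq] at ht ht'
    obtain ⟨h1, h2⟩ := Prod.mk.inj h
    exact Prod.ext h1 (Prod.ext h2 (ht.2.trans ht'.2.symm))
  rw [card_eq_sum_card_fiberwise (f := fun t => t.2.2) (t := M ×ˢ M) fun t ht => ?_]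
  · push_cast
    refine (sum_le_card_nsmul _ _ _ hfiber).trans_eq ?_
    rw [card_product, nsmul_eq_mul]
    push_cast
    ring
  · simp only [Q, coe_filter, Set.mem_ofPred_eq, mem_mulEqQuadruples] at ht
    exact mem_product.mpr ⟨ht.1.1.2.2.1, ht.1.1.2.2.2⟩

theorem card_mulEqQuadruples_le {p N : ℕ} [Fact p.Prime] (hNp : N < p) (P : Finset ℕ)
    (hP : ∀ q ∈ P, q.Prime ∧ q ≤ N) (M : Finset (ZMod p)) (hM : ∀ m ∈ M, m ≠ 0) :
    (#(mulEqQuadruples P M) : ℝ) ≤ #P * #M + #M ^ 2 * (1 + 5 * N ^ 2 / p) := by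
  have hunit : ∀ q ∈ P, IsUnit (q : ZMod p) := fun q hq =>
    (ZMod.isUnit_iff_coprime q p).mpr <|
      (Nat.coprime_primes (hP q hq).1 Fact.out).mpr (by have := (hP q hq).2; omega)
  rw [← card_filter_add_card_filter_not (fun t => t.1 = t.2.1)]
  push_cast
  exact add_le_add (by exact_mod_cast card_diagonal_mulEqQuadruples_le P M hunit)
    (card_offDiagonal_mulEqQuadruples_le P M (fun q hq => (hP q hq).2)
      (fun q hq r hr => (Nat.coprime_primes (hP q hq).1 (hP r hr).1).mpr) hM)

theorem stmt_7 :
    ∃ C : ℝ, 0 < C ∧ ∀ (p N : ℕ), p.Prime → 2 ≤ N → N < p →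
      ∀ (M : Finset (ZMod p)), (∀ m ∈ M, m ≠ 0) →
      (((((Finset.Icc 1 N).filter Nat.Prime) ×ˢ ((Finset.Icc 1 N).filter Nat.Prime)
          ×ˢ (M ×ˢ M)).filter
          (fun t : ℕ × ℕ × (ZMod p × ZMod p) =>
            (t.1 : ZMod p) * t.2.2.1 = (t.2.1 : ZMod p) * t.2.2.2)).card : ℝ)
        ≤ C * ((N : ℝ) * M.card / Real.log N + (M.card : ℝ) ^ 2
            + (N : ℝ) ^ 2 * (M.card : ℝ) ^ 2 / p) := by
  obtain ⟨C, hC⟩ := exists_primeCounting_le_mul_div_log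
  refine ⟨max C 5, lt_max_of_lt_right (by norm_num), fun p N hp hN hNp M hM => ?_⟩
  have := Fact.mk hp
  set P := (Icc 1 N).filter Nat.Prime
  have hP : (#P : ℝ) ≤ max C 5 * N / Real.log N := by
    rw [show P = N.primesLE from (Nat.primesLE_eq_filter_Icc_one N).symm,
      Nat.primesLE_card_eq_primeCounting]
    exact (hC N hN).trans (by gcongr; exact le_max_left _ _)
  have hJ := card_mulEqQuadruples_le hNp P (fun q hq => by
    simp only [P, mem_filter, mem_Icc] at hq; exact ⟨hq.2, hq.1.2⟩) M hM
  calc _ ≤ (#P * #M + #M ^ 2 * (1 + 5 * N ^ 2 / p) : ℝ) := hJ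
    _ = #P * #M + 1 * #M ^ 2 + 5 * (N ^ 2 * #M ^ 2 / p) := by ring
    _ ≤ max C 5 * N / Real.log N * #M + max C 5 * #M ^ 2 + max C 5 * (N ^ 2 * #M ^ 2 / p) := by
      gcongr <;> apply le_max_of_le_right <;> norm_num
    _ = _ := by ring
end

section
/- Let $p$ be a prime, $L, N$ integers with $0 < L < L+N < p$, and $\mathcal{A} \subseteq \mathbb{F}_p$ a finite set. Assuming the bound $J_3(L,N) \ll N^{21/4}$ on the number of solutions of $\sum_{i=1}^3 n_i! \equiv \sum_{i=4}^6 n_i! \pmod p$ with $L+1 \le n_i \le L+N$, one has $\max_{\gcd(a,p)=1} \Big| \sum_{n=L+1}^{L+N} \sum_{x \in \mathcal{A}} e_p(a\, n!\, x) \Big| \ll |\mathcal{A}|^{5/6} N^{7/8} p^{1/6}$, where $e_p(z) = \exp(2\pi i z / p)$. -/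
/-!
Write `f(x) = ∑ₙ e_p(a n! x)`. Hölder's inequality with exponent 6 gives
`|∑_{x ∈ 𝒜} f(x)|⁶ ≤ |𝒜|⁵ ∑_{x ∈ 𝒜} |f(x)|⁶ ≤ |𝒜|⁵ ∑_{x ∈ 𝔽_p} |f(x)|⁶`, and expanding
`|f(x)|⁶ = f(x)³ · conj (f(x)³)` and summing over `x` by orthogonality of characters
gives exactly `p · J₃(L, N)`. The hypothesis on `J₃` then yields the bound after taking sixth roots.
-/

open Finset Complex ComplexConjugate

section Energy

variable {ι R : Type*}

/-- The paper's `J_k`: the number of `(t, u) ∈ sᵏ × sᵏ` with `∑ g(tᵢ) = ∑ g(uᵢ)`. -/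
def sumEnergy [AddCommMonoid R] [DecidableEq R] (k : ℕ) (s : Finset ι) (g : ι → R) : ℕ :=
  #{t ∈ (Fintype.piFinset fun _ : Fin k => s) ×ˢ (Fintype.piFinset fun _ : Fin k => s) |
    ∑ i, g (t.1 i) = ∑ i, g (t.2 i)}

lemma AddChar.map_finsetSum {A M : Type*} [AddCommMonoid A] [CommMonoid M] (ψ : AddChar A M)
    (s : Finset ι) (g : ι → A) : ψ (∑ i ∈ s, g i) = ∏ i ∈ s, ψ (g i) :=
  map_prod ψ.toMonoidHom (fun i => Multiplicative.ofAdd (g i)) s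

lemma AddChar.IsPrimitive.mulShift [CommRing R] {M : Type*} [CommMonoid M] {ψ : AddChar R M}
    (hψ : ψ.IsPrimitive) {a : R} (ha : IsUnit a) : (ψ.mulShift a).IsPrimitive := fun b hb => by
  rw [AddChar.mulShift_mulShift]
  exact hψ (mt ha.mul_right_eq_zero.mp hb)

lemma norm_sum_pow_le_card_pow_mul_sum_univ {α E : Type*} [Fintype α] [SeminormedAddCommGroup E]
    (A : Finset α) (f : α → E) (m : ℕ) :
    ‖∑ x ∈ A, f x‖ ^ (m + 1) ≤ #A ^ m * ∑ x, ‖f x‖ ^ (m + 1) :=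
  calc ‖∑ x ∈ A, f x‖ ^ (m + 1)
      ≤ (∑ x ∈ A, ‖f x‖) ^ (m + 1) := by gcongr; exact norm_sum_le _ _
    _ ≤ #A ^ m * ∑ x ∈ A, ‖f x‖ ^ (m + 1) :=
        pow_sum_le_card_mul_sum_pow (fun _ _ => norm_nonneg _) m
    _ ≤ #A ^ m * ∑ x, ‖f x‖ ^ (m + 1) := by
        gcongr
        exact subset_univ A

variable [CommRing R]

lemma sum_addChar_pow {M : Type*} [CommSemiring M] (ψ : AddChar R M) (s : Finset ι) (g : ι → R)
    (x : R) (k : ℕ) :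
    (∑ n ∈ s, ψ (g n * x)) ^ k =
      ∑ t ∈ Fintype.piFinset (fun _ : Fin k => s), ψ ((∑ i, g (t i)) * x) := by
  rw [← Fin.prod_const, prod_univ_sum]
  refine sum_congr rfl fun t _ => ?_
  rw [sum_mul, AddChar.map_finsetSum]

variable [Fintype R] [DecidableEq R]

lemma sum_norm_sum_addChar_pow_eq {ψ : AddChar R ℂ} (hψ : ψ.IsPrimitive) (s : Finset ι)
    (g : ι → R) (k : ℕ) :
    ∑ x, ‖∑ n ∈ s, ψ (g n * x)‖ ^ (2 * k) = Fintype.card R * sumEnergy k s g := by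
  set P := Fintype.piFinset fun _ : Fin k => s
  have hnorm (z : ℂ) : ((‖z‖ ^ (2 * k) : ℝ) : ℂ) = z ^ k * conj (z ^ k) := by
    rw [mul_conj, normSq_eq_norm_sq, norm_pow]
    push_cast
    ring
  have hconj (x : R) : conj ((∑ n ∈ s, ψ (g n * x)) ^ k) =
      ∑ u ∈ P, ψ (-((∑ i, g (u i)) * x)) := by
    simp only [sum_addChar_pow, map_sum, AddChar.map_neg_eq_conj, P]
  apply Complex.ofReal_injective
  simp only [ofReal_sum, ofReal_mul, ofReal_natCast]
  calc ∑ x, ((‖∑ n ∈ s, ψ (g n * x)‖ ^ (2 * k) : ℝ) : ℂ)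
      = ∑ t ∈ P, ∑ u ∈ P, ∑ x, ψ (x * ((∑ i, g (t i)) - ∑ i, g (u i))) := by
        simp_rw [hnorm, hconj, sum_addChar_pow, sum_mul_sum, ← AddChar.map_add_eq_mul]
        rw [sum_comm]
        refine sum_congr rfl fun t _ => ?_
        rw [sum_comm]
        refine sum_congr rfl fun u _ => sum_congr rfl fun x _ => ?_
        ring_nf
    _ = ∑ t ∈ P ×ˢ P, if ∑ i, g (t.1 i) = ∑ i, g (t.2 i) then (Fintype.card R : ℂ) else 0 := by
        simp_rw [AddChar.sum_mulShift _ hψ, sub_eq_zero, sum_product, Nat.cast_ite, Nat.cast_zero]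
    _ = Fintype.card R * sumEnergy k s g := by
        rw [← sum_filter, sum_const, nsmul_eq_mul, mul_comm, sumEnergy]

lemma norm_sum_sum_addChar_pow_le {ψ : AddChar R ℂ} (hψ : ψ.IsPrimitive) (A : Finset R)
    (s : Finset ι) (g : ι → R) {k : ℕ} (hk : k ≠ 0) :
    ‖∑ x ∈ A, ∑ n ∈ s, ψ (g n * x)‖ ^ (2 * k) ≤
      #A ^ (2 * k - 1) * (Fintype.card R * sumEnergy k s g) := by
  have h := norm_sum_pow_le_card_pow_mul_sum_univ A (fun x => ∑ n ∈ s, ψ (g n * x)) (2 * k - 1)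
  rwa [Nat.sub_add_cancel (by omega), sum_norm_sum_addChar_pow_eq hψ] at h

end Energy

lemma ZMod.exp_eq_stdAddChar {p : ℕ} [NeZero p] (j : ZMod p) :
    exp (2 * Real.pi * I * (j.val : ℂ) / p) = ZMod.stdAddChar j := by
  rw [ZMod.stdAddChar_apply, ZMod.toCircle_apply]

theorem stmt_12_general (C : ℝ) :
    ∃ D : ℝ, 0 < D ∧ ∀ (p L N : ℕ), p.Prime → 0 < L → L + N < p →
      ∀ (A : Finset (ZMod p)),
      (((((Fintype.piFinset fun _ : Fin 3 => Finset.Icc (L + 1) (L + N)) ×ˢ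
          (Fintype.piFinset fun _ : Fin 3 => Finset.Icc (L + 1) (L + N))).filter
          (fun t : (Fin 3 → ℕ) × (Fin 3 → ℕ) =>
            ∑ i, (Nat.factorial (t.1 i) : ZMod p) = ∑ i, (Nat.factorial (t.2 i) : ZMod p))).card : ℝ)
          ≤ C * (N : ℝ) ^ ((21 : ℝ) / 4)) →
      ∀ a : ZMod p, a ≠ 0 →
        ‖∑ n ∈ Finset.Icc (L + 1) (L + N), ∑ x ∈ A,
            Complex.exp (2 * Real.pi * Complex.I *
              ((a * (Nat.factorial n : ZMod p) * x).val : ℂ) / (p : ℂ))‖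
          ≤ D * (A.card : ℝ) ^ ((5 : ℝ) / 6) * (N : ℝ) ^ ((7 : ℝ) / 8) * (p : ℝ) ^ ((1 : ℝ) / 6) := by
  refine ⟨max 1 C, by positivity, fun p L N hp _ _ A hJ a ha => ?_⟩
  have : Fact p.Prime := ⟨hp⟩
  have : NeZero p := ⟨hp.ne_zero⟩
  set D := max 1 C
  set s := Icc (L + 1) (L + N)
  have hψ : (ZMod.stdAddChar.mulShift a).IsPrimitive :=
    (ZMod.isPrimitive_stdAddChar p).mulShift ha.isUnit
  have hsum : ∑ n ∈ s, ∑ x ∈ A,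
        exp (2 * Real.pi * I * ((a * (n.factorial : ZMod p) * x).val : ℂ) / p) =
      ∑ x ∈ A, ∑ n ∈ s, ZMod.stdAddChar.mulShift a ((n.factorial : ZMod p) * x) := by
    rw [sum_comm]
    refine sum_congr rfl fun x _ => sum_congr rfl fun n _ => ?_
    rw [ZMod.exp_eq_stdAddChar, AddChar.mulShift_apply, mul_assoc]
  have hCD : C ≤ D ^ 6 := (le_max_right 1 C).trans (le_self_pow₀ (le_max_left 1 C) (by norm_num))
  rw [hsum, ← pow_le_pow_iff_left₀ (norm_nonneg _) (by positivity) (by norm_num : 6 ≠ 0)]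
  calc ‖∑ x ∈ A, ∑ n ∈ s, ZMod.stdAddChar.mulShift a ((n.factorial : ZMod p) * x)‖ ^ 6
      ≤ #A ^ 5 * (p * sumEnergy 3 s fun n => (n.factorial : ZMod p)) := by
        simpa using norm_sum_sum_addChar_pow_le hψ A s (fun n => (n.factorial : ZMod p)) (k := 3)
    _ ≤ #A ^ 5 * (p * (D ^ 6 * N ^ ((21 : ℝ) / 4))) := by
        gcongr
        exact hJ.trans (by gcongr)
    _ = (D * #A ^ ((5 : ℝ) / 6) * N ^ ((7 : ℝ) / 8) * p ^ ((1 : ℝ) / 6)) ^ 6 := by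
        simp only [mul_pow, ← Real.rpow_mul_natCast (Nat.cast_nonneg _)]
        norm_num
        ring

theorem stmt_12 (C : ℝ) (hC : 0 < C) :
    ∃ D : ℝ, 0 < D ∧ ∀ (p L N : ℕ), p.Prime → 0 < L → L + N < p →
      ∀ (A : Finset (ZMod p)),
      (((((Fintype.piFinset fun _ : Fin 3 => Finset.Icc (L + 1) (L + N)) ×ˢ
          (Fintype.piFinset fun _ : Fin 3 => Finset.Icc (L + 1) (L + N))).filter
          (fun t : (Fin 3 → ℕ) × (Fin 3 → ℕ) =>
            ∑ i, (Nat.factorial (t.1 i) : ZMod p) = ∑ i, (Nat.factorial (t.2 i) : ZMod p))).card : ℝ)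
          ≤ C * (N : ℝ) ^ ((21 : ℝ) / 4)) →
      ∀ a : ZMod p, a ≠ 0 →
        ‖∑ n ∈ Finset.Icc (L + 1) (L + N), ∑ x ∈ A,
            Complex.exp (2 * Real.pi * Complex.I *
              ((a * (Nat.factorial n : ZMod p) * x).val : ℂ) / (p : ℂ))‖
          ≤ D * (A.card : ℝ) ^ ((5 : ℝ) / 6) * (N : ℝ) ^ ((7 : ℝ) / 8) * (p : ℝ) ^ ((1 : ℝ) / 6) :=
  stmt_12_general C
end

section
/- Let $p$ be a prime, let $\mathcal{A} \subseteq \mathbb{F}_p^*$ be nonempty, and suppose the interval $\mathcal{I} = \{1, \ldots, N\} \pmod p$ satisfies $\mathcal{I} \subseteq \mathcal{A}/\mathcal{A}$. Then there exists a subset $\mathcal{A}' \subseteq \mathcal{A}$ with $|\mathcal{A}'| \ge \tfrac{1}{2}|\mathcal{A}|$ such that $|\mathcal{A}\cdot\mathcal{A}| \cdot |\mathcal{A}/\mathcal{A}|^{1/2} \gg |\mathcal{I} \cdot \mathcal{A}'|$. -/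
/-!
Katz–Shen: by Plünnecke–Petridis, a subset `Y ⊆ X` minimising `|Y B| / |Y|` satisfies
`|Y B B| ≤ (|X B| / |X|)² |Y|`. Applied in `G × ℤ` to `B = B₁ × {0} ∪ B₂ × {1, …, r}` with
`r ≈ |X B₁| / |X B₂|`, this bounds `|Y B₁ B₂|` by `|X B₁| |X B₂| |Y| / |X|²` up to a constant, and
peeling off such sets `Y` until half of `X` is covered gives `X' ⊆ X` with `|X'| ≥ |X| / 2` and
`|X' B₁ B₂| ≪ |X B₁| |X B₂| / |X|`. For `B₁ = A`, `B₂ = A⁻¹` (inside the units of `𝔽_p`) this is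
`|A' A / A| ≪ |A A| |A / A| / |A|`, and `I A' ⊆ A' A / A`; finally `|A / A| ≤ |A|²` turns
`|A / A| / |A|` into at most `|A / A|^{1/2}`.
-/

open Finset Pointwise

namespace Finset

section Mul

variable {α : Type*} [Mul α] [DecidableEq α]

lemma exists_subset_forall_card_mul_mul_card_le {X : Finset α} (hX : X.Nonempty) (B : Finset α) :
    ∃ U ⊆ X, U.Nonempty ∧ ∀ V ⊆ X, #(U * B) * #V ≤ #(V * B) * #U := by
  have hXmem : X ∈ X.powerset.erase ∅ := mem_erase_of_ne_of_mem hX.ne_empty (mem_powerset_self X)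
  obtain ⟨U, hU, hUmin⟩ :=
    exists_min_image (X.powerset.erase ∅) (fun U ↦ (#(U * B) : ℚ≥0) / #U) ⟨X, hXmem⟩
  rw [mem_erase, mem_powerset, ← nonempty_iff_ne_empty] at hU
  refine ⟨U, hU.2, hU.1, fun V hVX ↦ ?_⟩
  obtain rfl | hV := V.eq_empty_or_nonempty
  · simp
  have hVmem : V ∈ X.powerset.erase ∅ := mem_erase_of_ne_of_mem hV.ne_empty (mem_powerset.2 hVX)
  exact mod_cast (div_le_div_iff₀ (by simpa using hU.1.card_pos) (by simpa using hV.card_pos)).1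
    (hUmin V hVmem)

end Mul

section CommGroup

variable {G : Type*} [CommGroup G] [DecidableEq G]

lemma exists_subset_card_mul_mul_mul_sq_le {X : Finset G} (hX : X.Nonempty) (B : Finset G) :
    ∃ Y ⊆ X, Y.Nonempty ∧ #(Y * B * B) * #X ^ 2 ≤ #(X * B) ^ 2 * #Y := by
  obtain ⟨U, hUX, hU, hUmin⟩ := exists_subset_forall_card_mul_mul_card_le hX B
  have hPetridis : #(U * B * B) * #U ≤ #(U * B) ^ 2 := by
    simpa only [mul_comm B U, sq] using
      pluennecke_petridis_inequality_mul B fun V hVU ↦ hUmin V (hVU.trans hUX)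
  refine ⟨U, hUX, hU, Nat.le_of_mul_le_mul_right ?_ (pow_pos hU.card_pos 2)⟩
  calc #(U * B * B) * #X ^ 2 * #U ^ 2 = #(U * B * B) * #U * #X ^ 2 * #U := by ring
    _ ≤ (#(U * B) * #X) ^ 2 * #U := by rw [mul_pow]; gcongr
    _ ≤ (#(X * B) * #U) ^ 2 * #U := by gcongr ?_ ^ 2 * _; exact hUmin X subset_rfl
    _ = #(X * B) ^ 2 * #U * #U ^ 2 := by ring

lemma exists_subset_card_mul_mul_le_of_card_mul_le {X B₁ B₂ : Finset G} (hX : X.Nonempty)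
    (hB₂ : B₂.Nonempty) (hab : #(X * B₂) ≤ #(X * B₁)) :
    ∃ Y ⊆ X, Y.Nonempty ∧ #(Y * B₁ * B₂) * #X ^ 2 ≤ 9 * (#(X * B₁) * #(X * B₂)) * #Y := by
  set a := #(X * B₁)
  set b := #(X * B₂)
  have hb : 0 < b := (hX.mul hB₂).card_pos
  set r := a / b + 1
  have har : a ≤ r * b := by have := Nat.lt_div_mul_add (a := a) hb; rw [add_mul, one_mul]; omega
  have hra : r * b ≤ 2 * a := by have := Nat.div_mul_le_self a b; rw [add_mul, one_mul]; omega
  set J : Finset (Multiplicative ℤ) := (Icc 1 (r : ℤ)).map Multiplicative.ofAdd.toEmbedding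
  have hJ : #J = r := by simp [J]
  have hr : 0 < r := Nat.succ_pos _
  have hJ₁ : ({1} : Finset (Multiplicative ℤ)) * J = J := one_mul J
  -- `r b ≤ 2 a` makes `|X B| ≤ 3 a`, and `a ≤ r b` pays for the factor `r` in `Y B B ⊇ Y B₁ B₂ × J`.
  set B : Finset (G × Multiplicative ℤ) := B₁ ×ˢ {1} ∪ B₂ ×ˢ J
  obtain ⟨Y', hY'X, hY', hY'B⟩ :=
    exists_subset_card_mul_mul_mul_sq_le (hX.product (singleton_nonempty 1)) B
  rw [product_singleton, subset_map_iff] at hY'X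
  obtain ⟨Y, hYX, rfl⟩ := hY'X
  rw [← product_singleton] at hY' hY'B
  refine ⟨Y, hYX, by simpa using hY', Nat.le_of_mul_le_mul_right ?_ hr⟩
  have hlower : #(Y * B₁ * B₂) * r ≤ #(Y ×ˢ {1} * B * B) := by
    rw [← hJ, ← card_product]
    refine card_le_card ?_
    calc (Y * B₁ * B₂) ×ˢ J = Y ×ˢ {1} * B₁ ×ˢ {1} * B₂ ×ˢ J := by
          rw [product_mul_product_comm, product_mul_product_comm, singleton_mul_singleton, mul_one,
            hJ₁]
      _ ⊆ Y ×ˢ {1} * B * B := by gcongr <;> simp [B]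
  have hupper : #(X ×ˢ {1} * B) ≤ a + b * r := by
    rw [mul_union, product_mul_product_comm, product_mul_product_comm, singleton_mul_singleton,
      mul_one, hJ₁]
    refine (card_union_le _ _).trans ?_
    rw [card_product, card_product, card_singleton, mul_one, hJ]
  calc #(Y * B₁ * B₂) * #X ^ 2 * r = #(Y * B₁ * B₂) * r * #X ^ 2 := by ring
    _ ≤ #(Y ×ˢ {1} * B * B) * #(X ×ˢ ({1} : Finset (Multiplicative ℤ))) ^ 2 := by
        rw [card_product, card_singleton, mul_one]; gcongr
    _ ≤ #(X ×ˢ {1} * B) ^ 2 * #(Y ×ˢ ({1} : Finset (Multiplicative ℤ))) := hY'B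
    _ ≤ (3 * a) ^ 2 * #Y := by
        rw [card_product, card_singleton, mul_one]; gcongr; nlinarith
    _ = 9 * (a * a) * #Y := by ring
    _ ≤ 9 * (a * (r * b)) * #Y := by gcongr
    _ = 9 * (a * b) * #Y * r := by ring

lemma exists_subset_card_mul_mul_le {X B₁ B₂ : Finset G} (hX : X.Nonempty) (hB₁ : B₁.Nonempty)
    (hB₂ : B₂.Nonempty) :
    ∃ Y ⊆ X, Y.Nonempty ∧ #(Y * B₁ * B₂) * #X ^ 2 ≤ 9 * (#(X * B₁) * #(X * B₂)) * #Y := by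
  rcases le_total #(X * B₂) #(X * B₁) with h | h
  · exact exists_subset_card_mul_mul_le_of_card_mul_le hX hB₂ h
  · simpa only [mul_right_comm _ B₁ B₂, mul_comm #(X * B₁)] using
      exists_subset_card_mul_mul_le_of_card_mul_le hX hB₁ h

/-- Pieces `Y` are peeled off `R` only while at least `|X| / 2` elements remain, so their bound
relative to the remainder costs a factor `4` relative to `X`. -/
lemma exists_subset_card_le_add_card_mul_mul_le {X B₁ B₂ : Finset G} (hB₁ : B₁.Nonempty)
    (hB₂ : B₂.Nonempty) {R : Finset G} (hRX : R ⊆ X) :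
    ∃ Z ⊆ R, 2 * #R ≤ 2 * #Z + #X ∧
      #(Z * B₁ * B₂) * #X ^ 2 ≤ 36 * (#(X * B₁) * #(X * B₂)) * #Z := by
  induction R using Finset.strongInduction with
  | H R ih =>
  by_cases hsmall : 2 * #R ≤ #X
  · exact ⟨∅, empty_subset _, by simpa, by simp⟩
  obtain ⟨Y, hYR, hY, hYB⟩ := exists_subset_card_mul_mul_le (X := R)
    (card_pos.1 (by omega)) hB₁ hB₂
  obtain ⟨Z, hZR, hZcard, hZB⟩ := ih (R \ Y) (sdiff_ssubset hYR hY) (sdiff_subset.trans hRX)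
  have hZY : Disjoint Z Y := disjoint_of_subset_left hZR sdiff_disjoint
  refine ⟨Z ∪ Y, union_subset (hZR.trans sdiff_subset) hYR, ?_, ?_⟩
  · rw [card_union_of_disjoint hZY]
    have := card_sdiff_add_card_eq_card hYR
    omega
  · have hXR : #X ^ 2 ≤ 4 * #R ^ 2 := by nlinarith
    have hYX : #(Y * B₁ * B₂) * #X ^ 2 ≤ 36 * (#(X * B₁) * #(X * B₂)) * #Y :=
      calc #(Y * B₁ * B₂) * #X ^ 2 ≤ 4 * (#(Y * B₁ * B₂) * #R ^ 2) := by rw [mul_left_comm]; gcongr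
        _ ≤ 4 * (9 * (#(R * B₁) * #(R * B₂)) * #Y) := by gcongr
        _ ≤ 4 * (9 * (#(X * B₁) * #(X * B₂)) * #Y) := by gcongr
        _ = 36 * (#(X * B₁) * #(X * B₂)) * #Y := by ring
    calc #((Z ∪ Y) * B₁ * B₂) * #X ^ 2 ≤ (#(Z * B₁ * B₂) + #(Y * B₁ * B₂)) * #X ^ 2 := by
          rw [union_mul, union_mul]; gcongr; exact card_union_le _ _
      _ ≤ 36 * (#(X * B₁) * #(X * B₂)) * #Z + 36 * (#(X * B₁) * #(X * B₂)) * #Y := by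
          rw [add_mul]; exact add_le_add hZB hYX
      _ = 36 * (#(X * B₁) * #(X * B₂)) * #(Z ∪ Y) := by rw [card_union_of_disjoint hZY]; ring

lemma exists_subset_card_le_two_mul_card_mul_mul_le {X B₁ B₂ : Finset G} (hB₁ : B₁.Nonempty)
    (hB₂ : B₂.Nonempty) :
    ∃ Z ⊆ X, #X ≤ 2 * #Z ∧ #(Z * B₁ * B₂) * #X ≤ 36 * (#(X * B₁) * #(X * B₂)) := by
  obtain ⟨Z, hZX, hZcard, hZB⟩ := exists_subset_card_le_add_card_mul_mul_le hB₁ hB₂ (subset_refl X)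
  refine ⟨Z, hZX, by omega, ?_⟩
  obtain rfl | hX := X.eq_empty_or_nonempty
  · simp
  refine Nat.le_of_mul_le_mul_right ?_ hX.card_pos
  calc #(Z * B₁ * B₂) * #X * #X = #(Z * B₁ * B₂) * #X ^ 2 := by ring
    _ ≤ 36 * (#(X * B₁) * #(X * B₂)) * #Z := hZB
    _ ≤ 36 * (#(X * B₁) * #(X * B₂)) * #X := by gcongr

end CommGroup

lemma exists_subset_card_le_two_mul_card_mul_div_le {K : Type*} [CommGroupWithZero K]
    [DecidableEq K] {A : Finset K} (hA : A.Nonempty) (hA₀ : 0 ∉ A) :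
    ∃ A' ⊆ A, #A ≤ 2 * #A' ∧ #(A' * A / A) * #A ≤ 36 * (#(A * A) * #(A / A)) := by
  classical
  set B : Finset Kˣ := A.preimage Units.val Units.val_injective.injOn
  have hBA : B.image Units.val = A := by
    rw [image_preimage, filter_true_of_mem]
    exact fun a ha ↦ ⟨Units.mk0 a (ne_of_mem_of_not_mem ha hA₀), rfl⟩
  have hcard : ∀ S : Finset Kˣ, #(S.image Units.val) = #S :=
    fun S ↦ card_image_of_injective S Units.val_injective
  have hB : B.Nonempty := by simpa [← hBA] using hA
  obtain ⟨Z, hZB, hZcard, hZ⟩ := exists_subset_card_le_two_mul_card_mul_mul_le (X := B) hB hB.inv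
  refine ⟨Z.image Units.val, hBA ▸ image_subset_image hZB, by rwa [← hBA, hcard, hcard], ?_⟩
  have hmul : ∀ S T : Finset Kˣ, (S * T).image Units.val = S.image Units.val * T.image Units.val :=
    fun S T ↦ image_mul (Units.coeHom K)
  have hdiv : ∀ S T : Finset Kˣ, (S / T).image Units.val = S.image Units.val / T.image Units.val :=
    fun S T ↦ image_div (Units.coeHom K)
  rw [← div_eq_mul_inv, ← div_eq_mul_inv] at hZ
  rwa [← hBA, ← hmul, ← hmul, ← hdiv, ← hdiv, hcard, hcard, hcard, hcard]

end Finset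

lemma le_mul_sqrt_of_mul_le {x y z m : ℝ} (hm : 0 < m) (hy : 0 ≤ y) (hz₀ : 0 ≤ z)
    (hz : z ≤ m ^ 2) (h : x * m ≤ y * z) : x ≤ y * √z := by
  have hzm : √z ≤ m := Real.sqrt_le_iff.2 ⟨hm.le, hz⟩
  refine le_of_mul_le_mul_right ?_ hm
  calc x * m ≤ y * z := h
    _ = y * √z * √z := by rw [mul_assoc, Real.mul_self_sqrt hz₀]
    _ ≤ y * √z * m := by gcongr

theorem stmt_17 :
    ∃ c : ℝ, 0 < c ∧ ∀ (p : ℕ) [Fact p.Prime], ∀ (A : Finset (ZMod p)) (N : ℕ),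
      A.Nonempty → (0 : ZMod p) ∉ A →
      ((Finset.Icc 1 N).image (fun n : ℕ => (n : ZMod p))) ⊆ A / A →
      ∃ A' ⊆ A, A.card ≤ 2 * A'.card ∧
        c * ((((Finset.Icc 1 N).image (fun n : ℕ => (n : ZMod p))) * A').card : ℝ)
          ≤ ((A * A).card : ℝ) * ((A / A).card : ℝ) ^ ((1 : ℝ) / 2) := by
  refine ⟨1 / 36, by norm_num, fun p _ A N hA hA₀ hI ↦ ?_⟩
  obtain ⟨A', hA'A, hA'card, hA'⟩ := exists_subset_card_le_two_mul_card_mul_div_le hA hA₀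
  refine ⟨A', hA'A, hA'card, ?_⟩
  have hIA' : #((Icc 1 N).image (fun n : ℕ => (n : ZMod p)) * A') ≤ #(A' * A / A) := by
    refine card_le_card ?_
    rw [mul_div_assoc, mul_comm]
    gcongr
  have hdiv : #(A / A) ≤ #A ^ 2 := card_div_le.trans (sq _).ge
  rw [← Real.sqrt_eq_rpow, one_div_mul_eq_div, div_le_iff₀' (by norm_num), ← mul_assoc]
  refine le_mul_sqrt_of_mul_le (m := #A) (by exact_mod_cast hA.card_pos) (by positivity)
    (by positivity) (by exact_mod_cast hdiv) ?_
  rw [mul_assoc]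
  exact_mod_cast (Nat.mul_le_mul_right _ hIA').trans hA'
end

section
/- Let $G$ be an abelian group, $X, B_1, \ldots, B_k$ finite nonempty subsets of $G$ (written multiplicatively). Then there exists a subset $X' \subseteq X$ with $|X'| > \tfrac{1}{2}|X|$ such that $|X' B_1 \cdots B_k| \ll |X B_1| \cdots |X B_k| / |X|^{k-1}$, with implied constant depending only on $k$. -/
/-!
Petridis: every nonempty `A` contains a nonempty `Z` with
`#(Z * D ^ n) ≤ (#(A * D) / #A) ^ n * #Z`. To reach the mixed product `∏ i, B i`, pass to
`G × ℤ^k`, tag `B i` by a set `T i` of `f i` points on the `i`-th coordinate axis and apply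
Petridis to `D = ⋃ i, B i × T i`. Then `D ^ k ⊇ (∏ i, B i) × ∏ i, T i`, where the tags make
`#(∏ i, T i) = ∏ i, f i`, while `#(W * D) ≤ ∑ i, f i * #(W * B i)`. The weights
`f i = ∏ j ≠ i, #(X * B j)` make all summands equal, so every `W ⊆ X` with `#X ≤ 2 * #W`
contains a nonempty `Z` with `#(Z * ∏ i, B i) * #X ^ k ≤ (2k)^k * (∏ i, #(X * B i)) * #Z`.
Collecting such pieces disjointly until they cover more than half of `X` gives `X'`.
-/

open Finset Pointwise

theorem prod_product_eq_product_prod {ι α β : Type*} [CommMonoid α] [CommMonoid β]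
    [DecidableEq α] [DecidableEq β] (s : Finset ι) (f : ι → Finset α) (g : ι → Finset β) :
    ∏ i ∈ s, f i ×ˢ g i = (∏ i ∈ s, f i) ×ˢ ∏ i ∈ s, g i := by
  induction s using Finset.cons_induction with
  | empty => simp
  | cons a s ha ih => simp [prod_cons, ih]

theorem card_mul_biUnion_le {ι α : Type*} [Mul α] [DecidableEq α] (s : Finset α)
    (t : Finset ι) (f : ι → Finset α) : #(s * t.biUnion f) ≤ ∑ i ∈ t, #(s * f i) := by
  refine (card_le_card fun x hx ↦ ?_).trans card_biUnion_le
  obtain ⟨a, ha, b, hb, rfl⟩ := mem_mul.1 hx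
  obtain ⟨i, hi, hbi⟩ := mem_biUnion.1 hb
  exact mem_biUnion.2 ⟨i, hi, mul_mem_mul ha hbi⟩

theorem prod_card_le_card_prod_image_mulSingle {ι M : Type*} [Fintype ι] [DecidableEq ι]
    [CommMonoid M] [DecidableEq M] (s : ι → Finset M) :
    ∏ i, #(s i) ≤ #(∏ i, (s i).image (Pi.mulSingle i)) := by
  rw [← Fintype.card_piFinset]
  refine card_le_card fun x hx ↦ ?_
  rw [← Finset.univ_prod_mulSingle x, ← mem_coe, coe_prod]
  exact Set.finsetProd_mem_finsetProd _ _ _ fun i _ ↦ by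
    simpa using Fintype.mem_piFinset.1 hx i

section Petridis

variable {G : Type*} [CommGroup G] [DecidableEq G]

theorem card_mul_pow_mul_card_pow_le {U D : Finset G}
    (hU : ∀ U' ⊆ U, #(U * D) * #U' ≤ #(U' * D) * #U) (n : ℕ) :
    #(U * D ^ n) * #U ^ n ≤ #(U * D) ^ n * #U := by
  induction n with
  | zero => simp
  | succ n ih =>
    have petridis := pluennecke_petridis_inequality_mul (D ^ n) hU
    rw [mul_comm (D ^ n), mul_assoc, ← pow_succ] at petridis
    calc #(U * D ^ (n + 1)) * #U ^ (n + 1) = #(U * D ^ (n + 1)) * #U * #U ^ n := by ring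
      _ ≤ #(U * D) * (#(U * D ^ n) * #U ^ n) := by rw [← mul_assoc]; gcongr
      _ ≤ #(U * D) * (#(U * D) ^ n * #U) := by gcongr
      _ = #(U * D) ^ (n + 1) * #U := by ring

theorem exists_subset_card_mul_pow_mul_card_pow_le {A : Finset G} (hA : A.Nonempty)
    (D : Finset G) (n : ℕ) :
    ∃ Z ⊆ A, Z.Nonempty ∧ #(Z * D ^ n) * #A ^ n ≤ #(A * D) ^ n * #Z := by
  have hA' : A ∈ A.powerset.filter Finset.Nonempty := by simp [hA]
  obtain ⟨U, hU, hmin⟩ := exists_min_image _ (fun U ↦ (#(U * D) / #U : ℚ)) ⟨A, hA'⟩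
  obtain ⟨hUA, hUne⟩ := by simpa using hU
  have ratio_le {V : Finset G} (hVA : V ⊆ A) (hV : V.Nonempty) :
      #(U * D) * #V ≤ #(V * D) * #U := by
    have := hmin V (by simp [hVA, hV])
    rw [div_le_div_iff₀ (by simpa using hUne.card_pos) (by simpa using hV.card_pos)] at this
    exact_mod_cast this
  have hU : ∀ U' ⊆ U, #(U * D) * #U' ≤ #(U' * D) * #U := by
    intro U' hU'
    obtain rfl | hU'ne := U'.eq_empty_or_nonempty
    · simp
    · exact ratio_le (hU'.trans hUA) hU'ne
  refine ⟨U, hUA, hUne, Nat.le_of_mul_le_mul_right ?_ (pow_pos hUne.card_pos n)⟩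
  calc #(U * D ^ n) * #A ^ n * #U ^ n = #(U * D ^ n) * #U ^ n * #A ^ n := by ring
    _ ≤ #(U * D) ^ n * #U * #A ^ n := by
      gcongr ?_ * _; exact card_mul_pow_mul_card_pow_le hU n
    _ = (#(U * D) * #A) ^ n * #U := by ring
    _ ≤ (#(A * D) * #U) ^ n * #U := by gcongr ?_ ^ _ * _; exact ratio_le subset_rfl hA
    _ = #(A * D) ^ n * #U * #U ^ n := by ring

end Petridis

theorem exists_subset_card_mul_prod_mul_prod_le {ι G : Type*} [Fintype ι] [DecidableEq ι]
    [CommGroup G] [DecidableEq G] {W : Finset G} (hW : W.Nonempty) (B : ι → Finset G)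
    (f : ι → ℕ) :
    ∃ Z ⊆ W, Z.Nonempty ∧ #(Z * ∏ i, B i) * (∏ i, f i) * #W ^ Fintype.card ι ≤
      (∑ i, f i * #(W * B i)) ^ Fintype.card ι * #Z := by
  set n := Fintype.card ι
  let s (i : ι) : Finset (Multiplicative ℤ) :=
    (range (f i)).map (Nat.castEmbedding.trans Multiplicative.ofAdd.toEmbedding)
  have card_s (i : ι) : #(s i) = f i := by rw [card_map, card_range]
  let T (i : ι) : Finset (ι → Multiplicative ℤ) := (s i).image (Pi.mulSingle i)
  have card_T (i : ι) : #(T i) = f i := by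
    rw [card_image_of_injective _ (Pi.mulSingle_injective i), card_s]
  let D : Finset (G × (ι → Multiplicative ℤ)) := univ.biUnion fun i ↦ B i ×ˢ T i
  let e : G ↪ G × (ι → Multiplicative ℤ) := ⟨fun g ↦ (g, 1), Prod.mk_left_injective 1⟩
  have map_e (V : Finset G) : V.map e = V ×ˢ 1 := (product_singleton ..).symm
  have card_product_one (V : Finset G) : #(V ×ˢ (1 : Finset (ι → Multiplicative ℤ))) = #V := by simp
  obtain ⟨Zh, hZhW, hZh, petridis⟩ :=
    exists_subset_card_mul_pow_mul_card_pow_le (hW.map (f := e)) D n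
  obtain ⟨Z, hZW, rfl⟩ := subset_map_iff.1 hZhW
  rw [map_e, map_e] at petridis
  have card_mul_D : #((W ×ˢ 1) * D) ≤ ∑ i, f i * #(W * B i) :=
    (card_mul_biUnion_le _ _ _).trans_eq <| sum_congr rfl fun i _ ↦ by
      rw [product_mul_product_comm, one_mul, card_product, card_T, mul_comm]
  have prod_subset_pow : ∏ i, B i ×ˢ T i ⊆ D ^ n := by
    calc ∏ i, B i ×ˢ T i ⊆ ∏ _i : ι, D := by
          gcongr with i
          exact subset_biUnion_of_mem (fun i ↦ B i ×ˢ T i) (mem_univ i)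
      _ = D ^ n := by rw [prod_const, card_univ]
  refine ⟨Z, hZW, map_nonempty.1 hZh, ?_⟩
  calc #(Z * ∏ i, B i) * (∏ i, f i) * #W ^ n
      ≤ #(Z * ∏ i, B i) * #(∏ i, T i) * #W ^ n := by
        gcongr
        simpa only [card_s] using prod_card_le_card_prod_image_mulSingle s
    _ = #((Z ×ˢ 1) * ∏ i, B i ×ˢ T i) * #(W ×ˢ 1) ^ n := by
        rw [prod_product_eq_product_prod, product_mul_product_comm, one_mul, card_product,
          card_product_one]
    _ ≤ #((Z ×ˢ 1) * D ^ n) * #(W ×ˢ 1) ^ n := by gcongr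
    _ ≤ #((W ×ˢ 1) * D) ^ n * #(Z ×ˢ 1) := petridis
    _ ≤ (∑ i, f i * #(W * B i)) ^ n * #Z := by rw [card_product_one]; gcongr

theorem exists_subset_card_mul_prod_mul_card_pow_le {ι G : Type*} [Fintype ι] [DecidableEq ι]
    [CommGroup G] [DecidableEq G] {X W : Finset G} (hX : X.Nonempty) (B : ι → Finset G)
    (hB : ∀ i, (B i).Nonempty) (hWX : W ⊆ X) (hXW : #X ≤ 2 * #W) :
    ∃ Z ⊆ W, Z.Nonempty ∧ #(Z * ∏ i, B i) * #X ^ Fintype.card ι ≤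
      (2 * Fintype.card ι) ^ Fintype.card ι * (∏ i, #(X * B i)) * #Z := by
  set P := ∏ i, #(X * B i)
  have hP : 0 < P := prod_pos fun i _ ↦ (hX.mul (hB i)).card_pos
  have hW : W.Nonempty := card_pos.1 (by linarith [hX.card_pos])
  let f (i : ι) : ℕ := ∏ j ∈ univ.erase i, #(X * B j)
  have hf (i : ι) : f i * #(X * B i) = P := prod_erase_mul _ _ (mem_univ i)
  obtain ⟨Z, hZW, hZ, hZcard⟩ := exists_subset_card_mul_prod_mul_prod_le hW B f
  set n := Fintype.card ι
  have sum_le : ∑ i, f i * #(W * B i) ≤ n * P :=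
    calc ∑ i, f i * #(W * B i) ≤ ∑ i, f i * #(X * B i) := by gcongr
      _ = n * P := by rw [sum_congr rfl fun i _ ↦ hf i, sum_const, card_univ, smul_eq_mul]
  have prod_mul : (∏ i, f i) * P = P ^ n := by
    rw [← prod_mul_distrib, prod_congr rfl fun i _ ↦ hf i, prod_const, card_univ]
  refine ⟨Z, hZW, hZ, Nat.le_of_mul_le_mul_right ?_ (pow_pos hP n)⟩
  calc #(Z * ∏ i, B i) * #X ^ n * P ^ n = #(Z * ∏ i, B i) * #X ^ n * (∏ i, f i) * P := by
        rw [← prod_mul]; ring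
    _ ≤ #(Z * ∏ i, B i) * (2 * #W) ^ n * (∏ i, f i) * P := by gcongr
    _ = 2 ^ n * (#(Z * ∏ i, B i) * (∏ i, f i) * #W ^ n) * P := by ring
    _ ≤ 2 ^ n * ((∑ i, f i * #(W * B i)) ^ n * #Z) * P := by gcongr
    _ ≤ 2 ^ n * ((n * P) ^ n * #Z) * P := by gcongr
    _ = (2 * n) ^ n * P * #Z * P ^ n := by ring

theorem exists_subset_card_lt_two_mul_card_mul_le {α : Type*} [Mul α] [DecidableEq α]
    {X : Finset α} (S : Finset α) (a b : ℕ)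
    (h : ∀ W ⊆ X, #X ≤ 2 * #W → ∃ Z ⊆ W, Z.Nonempty ∧ #(Z * S) * a ≤ b * #Z) :
    ∃ X' ⊆ X, #X < 2 * #X' ∧ #(X' * S) * a ≤ b * #X' := by
  let good := X.powerset.filter fun Y ↦ #(Y * S) * a ≤ b * #Y
  obtain ⟨X', hX', hmax⟩ := exists_max_image good card ⟨∅, by simp [good]⟩
  obtain ⟨hX'X, hX'S⟩ := by simpa [good] using hX'
  refine ⟨X', hX'X, not_le.1 fun hle ↦ ?_, hX'S⟩
  have hcard : #(X \ X') = #X - #X' := card_sdiff_of_subset hX'X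
  obtain ⟨Z, hZ, hZne, hZS⟩ := h (X \ X') sdiff_subset (by omega)
  have hdisj : Disjoint X' Z := disjoint_sdiff.mono_right hZ
  have hunion : #((X' ∪ Z) * S) * a ≤ b * #(X' ∪ Z) :=
    calc #((X' ∪ Z) * S) * a ≤ (#(X' * S) + #(Z * S)) * a := by
          rw [union_mul]; gcongr; exact card_union_le _ _
      _ ≤ b * #(X' ∪ Z) := by rw [card_union_of_disjoint hdisj]; linarith
  have := hmax (X' ∪ Z) (by simp [good, hunion, union_subset hX'X (hZ.trans sdiff_subset)])
  rw [card_union_of_disjoint hdisj] at this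
  exact hZne.card_pos.ne' (by omega)

theorem stmt_18 (k : ℕ) (hk : 1 ≤ k) :
    ∃ C : ℝ, 0 < C ∧ ∀ (G : Type) [CommGroup G] [DecidableEq G]
      (X : Finset G) (B : Fin k → Finset G),
      X.Nonempty → (∀ i, (B i).Nonempty) →
      ∃ X' ⊆ X, X.card < 2 * X'.card ∧
        ((X' * ∏ i, B i).card : ℝ) * (X.card : ℝ) ^ (k - 1)
          ≤ C * ∏ i, ((X * B i).card : ℝ) := by
  refine ⟨(2 * k) ^ k, by positivity, fun G _ _ X B hX hB ↦ ?_⟩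
  obtain ⟨X', hX'X, hcard, hX'⟩ := exists_subset_card_lt_two_mul_card_mul_le (∏ i, B i) _ _
    fun W hWX hXW ↦ by
      simpa only [Fintype.card_fin] using
        exists_subset_card_mul_prod_mul_card_pow_le hX B hB hWX hXW
  refine ⟨X', hX'X, hcard, ?_⟩
  have : #(X' * ∏ i, B i) * #X ^ (k - 1) ≤ (2 * k) ^ k * ∏ i, #(X * B i) := by
    refine Nat.le_of_mul_le_mul_right ?_ hX.card_pos
    calc #(X' * ∏ i, B i) * #X ^ (k - 1) * #X = #(X' * ∏ i, B i) * #X ^ k := by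
          rw [mul_assoc, ← pow_succ, Nat.sub_add_cancel hk]
      _ ≤ (2 * k) ^ k * (∏ i, #(X * B i)) * #X' := hX'
      _ ≤ (2 * k) ^ k * (∏ i, #(X * B i)) * #X := by gcongr
  exact_mod_cast this
end
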